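/- arXiv:2006.14113 — 3 statements merged into one kernel-verified Lean document; each statement's English description precedes it below -/
import Mathlib

section
/- Let G be a factor tree and suppose nonnegative numbers c_j (j∈V) and positive numbers c_α (α∈F) satisfy ∑_{j∈V} c_j + ∑_{α∈F} c_α = 1. For each edge (j,α), define c_{jα} as the sum of all c-values over the component of G − {(j,α)} containing j. Then all c_{jα} ≥ 0 and the equations c_j − ∑_{α∈N(j)} c_{jα} = 1 − N_j for all j ∈ V and c_α + ∑_{i∈N(α)} c_{iα} = 1 for all α ∈ F are satisfied. -/
/-!
Two facts about a weighted tree give everything. Deleting an edge `(x, y)` leaves two components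
whose weights add up to the total, so `c_{jα} = 1 - c_{αj}`. Deleting a vertex `x` splits the tree
into one branch per neighbour `y`, namely the component of `y` after deleting `(x, y)`, so
`c_x + ∑_{y ∈ N(x)} c_{yx} = 1`. At a factor this is the factor equation; at a variable node,
substituting the first fact gives `c_j - ∑_α c_{jα} = 1 - N_j`.
-/

open Finset

namespace SimpleGraph

variable {W : Type*} {G : SimpleGraph W} {x y v : W}

lemma reachable_deleteEdges_of_walk_avoiding {u : W} (p : G.Walk v u) (hx : x ∉ p.support) :
    (G.deleteEdges {s(x, y)}).Reachable v u :=
  reachable_deleteEdges_iff_exists_walk.mpr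
    ⟨p, fun he => hx (p.fst_mem_support_of_mem_edges he)⟩

/-- `s(x, y)` is a bridge, so a walk to `y` that avoids it never passes through `x`. -/
lemma IsAcyclic.reachable_deleteEdges_iff (hG : G.IsAcyclic) (hxy : G.Adj x y) :
    (G.deleteEdges {s(x, y)}).Reachable v y ↔ ∃ p : G.Walk v y, x ∉ p.support := by
  classical
  refine ⟨fun ⟨q⟩ => ⟨q.mapLe (deleteEdges_le _), fun hx => ?_⟩,
    fun ⟨p, hp⟩ => reachable_deleteEdges_of_walk_avoiding p hp⟩
  rw [Walk.support_mapLe_eq_support] at hx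
  exact isBridge_iff.mp (isAcyclic_iff_forall_adj_isBridge.mp hG hxy) ⟨q.dropUntil x hx⟩

lemma IsAcyclic.not_reachable_deleteEdges_of_adj (hG : G.IsAcyclic) (hxy : G.Adj x y) :
    ¬ (G.deleteEdges {s(x, y)}).Reachable x y :=
  isBridge_iff.mp (isAcyclic_iff_forall_adj_isBridge.mp hG hxy)

lemma reachable_deleteEdges_or_of_walk (hxy : G.Adj x y) :
    ∀ {v : W}, G.Walk v x →
      (G.deleteEdges {s(x, y)}).Reachable v x ∨ (G.deleteEdges {s(x, y)}).Reachable v y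
  | _, .nil => .inl .rfl
  | v, .cons (v := b) hvb q => by
    by_cases he : s(v, b) = s(x, y)
    · rcases Sym2.eq_iff.mp he with ⟨rfl, -⟩ | ⟨rfl, -⟩
      exacts [.inl .rfl, .inr .rfl]
    · have hvb' : (G.deleteEdges {s(x, y)}).Adj v b := (deleteEdges_adj ..).mpr ⟨hvb, he⟩
      exact (reachable_deleteEdges_or_of_walk hxy q).imp hvb'.reachable.trans hvb'.reachable.trans

lemma Preconnected.reachable_deleteEdges_or (hG : G.Preconnected) (hxy : G.Adj x y) (v : W) :
    (G.deleteEdges {s(x, y)}).Reachable v x ∨ (G.deleteEdges {s(x, y)}).Reachable v y :=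
  reachable_deleteEdges_or_of_walk hxy (hG v x).some

/-- The unique `y` is the second vertex of the path from `x` to `v`. Two distinct candidates
`y`, `y'` would be joined by a walk avoiding `x`, which with the edge `x y'` links `x` to `y`
without the edge `s(x, y)`. -/
lemma IsTree.existsUnique_adj_reachable_deleteEdges (hG : G.IsTree) (hvx : v ≠ x) :
    ∃! y, G.Adj x y ∧ (G.deleteEdges {s(x, y)}).Reachable v y := by
  obtain ⟨p, hpath⟩ := (hG.connected x v).exists_isPath
  cases p with
  | nil => exact absurd rfl hvx
  | @cons _ y _ hxy q =>
    have hvy := reachable_deleteEdges_of_walk_avoiding (y := y) q.reverse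
      (by simpa using ((Walk.cons_isPath_iff hxy q).mp hpath).2)
    refine ⟨y, ⟨hxy, hvy⟩, ?_⟩
    rintro y' ⟨hxy', hvy'⟩
    by_contra hne
    obtain ⟨r, hr⟩ := (hG.isAcyclic.reachable_deleteEdges_iff hxy').mp hvy'
    obtain ⟨r', hr'⟩ := (hG.isAcyclic.reachable_deleteEdges_iff hxy).mp hvy
    have hxy'' : (G.deleteEdges {s(x, y)}).Adj x y' :=
      (deleteEdges_adj ..).mpr
        ⟨hxy', fun h => hne (Sym2.congr_right.mp (Set.mem_singleton_iff.mp h))⟩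
    refine hG.isAcyclic.not_reachable_deleteEdges_of_adj hxy
      (hxy''.reachable.trans (reachable_deleteEdges_of_walk_avoiding (r.reverse.append r') ?_))
    simp [Walk.mem_support_append_iff, hr, hr']

/-- For `x = j`, `y = α` this is the paper's `c_{jα}`. -/
def sideWeight {M : Type*} [AddCommMonoid M] [Fintype W] [DecidableEq W] (G : SimpleGraph W)
    [DecidableRel G.Adj] (w : W → M) (x y : W) : M :=
  ∑ v, if (G.deleteEdges {s(x, y)}).Reachable v x then w v else 0

variable {M : Type*} [AddCommMonoid M] [Fintype W] [DecidableEq W] [DecidableRel G.Adj]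

lemma IsTree.sideWeight_add_sideWeight (hG : G.IsTree) (hxy : G.Adj x y) (w : W → M) :
    G.sideWeight w x y + G.sideWeight w y x = ∑ v, w v := by
  rw [sideWeight, sideWeight, Sym2.eq_swap (a := y), ← sum_add_distrib]
  refine sum_congr rfl fun v _ => ?_
  have hnot_both : ¬ ((G.deleteEdges {s(x, y)}).Reachable v x ∧
      (G.deleteEdges {s(x, y)}).Reachable v y) := fun ⟨hx, hy⟩ =>
    hG.isAcyclic.not_reachable_deleteEdges_of_adj hxy (hx.symm.trans hy)
  rcases hG.connected.preconnected.reachable_deleteEdges_or hxy v with h | h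
  · rw [if_pos h, if_neg fun h' => hnot_both ⟨h, h'⟩, add_zero]
  · rw [if_neg fun h' => hnot_both ⟨h', h⟩, if_pos h, zero_add]

lemma IsTree.sum_sideWeight_add (hG : G.IsTree) (w : W → M) (x : W) :
    ∑ y ∈ univ.filter (G.Adj x), G.sideWeight w y x + w x = ∑ v, w v := by
  have hbranch : ∀ v, ∑ y ∈ univ.filter (G.Adj x),
      (if (G.deleteEdges {s(y, x)}).Reachable v y then w v else 0)
        + (if v = x then w v else 0) = w v := by
    intro v
    by_cases hvx : v = x
    · subst hvx
      have hfar : ∀ y ∈ univ.filter (G.Adj v), ¬ (G.deleteEdges {s(y, v)}).Reachable v y :=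
        fun y hy => by
          rw [Sym2.eq_swap]
          exact hG.isAcyclic.not_reachable_deleteEdges_of_adj (mem_filter.mp hy).2
      rw [sum_eq_zero fun y hy => if_neg (hfar y hy), if_pos rfl, zero_add]
    · obtain ⟨y, ⟨hxy, hvy⟩, huniq⟩ := hG.existsUnique_adj_reachable_deleteEdges hvx
      rw [sum_eq_single_of_mem y (by simpa using hxy), Sym2.eq_swap, if_pos hvy, if_neg hvx,
        add_zero]
      intro y' hy' hne
      rw [Sym2.eq_swap, if_neg fun h => hne (huniq y' ⟨(mem_filter.mp hy').2, h⟩)]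
  calc ∑ y ∈ univ.filter (G.Adj x), G.sideWeight w y x + w x
      = ∑ v, (∑ y ∈ univ.filter (G.Adj x),
          (if (G.deleteEdges {s(y, x)}).Reachable v y then w v else 0)
            + if v = x then w v else 0) := by
        rw [sum_add_distrib, Fintype.sum_ite_eq', sum_comm]
        rfl
    _ = ∑ v, w v := sum_congr rfl fun v _ => hbranch v

end SimpleGraph

lemma Finset.sum_filter_eq_sum_filter_inr {α β M : Type*} [Fintype α] [Fintype β]
    [AddCommMonoid M] (p : α ⊕ β → Prop) [DecidablePred p] (hp : ∀ a, ¬ p (.inl a))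
    (f : α ⊕ β → M) :
    ∑ x ∈ univ.filter p, f x = ∑ b ∈ univ.filter (fun b => p (.inr b)), f (.inr b) := by
  simp [sum_filter, Fintype.sum_sum_type, hp]

lemma Finset.sum_filter_eq_sum_filter_inl {α β M : Type*} [Fintype α] [Fintype β]
    [AddCommMonoid M] (p : α ⊕ β → Prop) [DecidablePred p] (hp : ∀ b, ¬ p (.inr b))
    (f : α ⊕ β → M) :
    ∑ x ∈ univ.filter p, f x = ∑ a ∈ univ.filter (fun a => p (.inl a)), f (.inl a) := by
  simp [sum_filter, Fintype.sum_sum_type, hp]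

open SimpleGraph

open Classical in
/-- Construction of feasible counting numbers on a factor tree: given nonnegative `c_j` and
positive `c_α` summing to one, the edge numbers obtained by summing the `c`-values over the
component containing `j` after deleting the edge `(j, α)` are nonnegative and satisfy the
counting-number equations. -/
theorem counting_numbers_construction {V F : Type*} [Fintype V] [Fintype F]
    (G : SimpleGraph (V ⊕ F))
    (hbip : ∀ v w, G.Adj v w →
      (∃ a b, v = Sum.inl a ∧ w = Sum.inr b) ∨ (∃ a b, v = Sum.inr b ∧ w = Sum.inl a))
    (htree : G.IsTree)
    (c : V → ℝ) (cF : F → ℝ) (hc : ∀ j, 0 ≤ c j) (hcF : ∀ α, 0 < cF α)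
    (hsum : (∑ j, c j) + ∑ α, cF α = 1) :
    let w : V ⊕ F → ℝ := Sum.elim c cF
    let ce : V → F → ℝ := fun j α =>
      ∑ v, if (G.deleteEdges {s(Sum.inl j, Sum.inr α)}).Reachable v (Sum.inl j)
        then w v else 0
    (∀ j α, G.Adj (Sum.inl j) (Sum.inr α) → 0 ≤ ce j α) ∧
      (∀ j : V,
        c j - ∑ α ∈ Finset.univ.filter (fun α : F => G.Adj (Sum.inl j) (Sum.inr α)), ce j α
          = 1 - ((Finset.univ.filter (fun α : F => G.Adj (Sum.inl j) (Sum.inr α))).card : ℝ)) ∧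
      (∀ α : F,
        cF α + ∑ j ∈ Finset.univ.filter (fun j : V => G.Adj (Sum.inl j) (Sum.inr α)), ce j α
          = 1) := by
  intro w ce
  have htotal : ∑ v, w v = 1 := by rwa [Fintype.sum_sum_type]
  have hVV : ∀ i i', ¬ G.Adj (.inl i) (.inl i') := fun i i' h => by simpa using hbip _ _ h
  have hFF : ∀ a b, ¬ G.Adj (.inr a) (.inr b) := fun a b h => by simpa using hbip _ _ h
  have hw : ∀ v, 0 ≤ w v := by
    rintro (j | α)
    exacts [hc j, (hcF α).le]
  refine ⟨fun j α _ => sum_nonneg fun v _ => ite_nonneg (hw v) le_rfl, fun j => ?_, fun α => ?_⟩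
  · have hbranches := htree.sum_sideWeight_add w (.inl j)
    rw [sum_filter_eq_sum_filter_inr _ (hVV j)] at hbranches
    have hside : ∀ α ∈ univ.filter (fun α => G.Adj (.inl j) (.inr α)),
        ce j α = 1 - G.sideWeight w (.inr α) (.inl j) := fun α hα => by
      rw [← htotal, ← htree.sideWeight_add_sideWeight (mem_filter.mp hα).2 w]
      exact (add_sub_cancel_right _ _).symm
    rw [sum_congr rfl hside, sum_sub_distrib, sum_const, nsmul_one]
    simp only [w, Sum.elim_inl] at hbranches
    linarith
  · have hbranches := htree.sum_sideWeight_add w (.inr α)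
    rw [sum_filter_eq_sum_filter_inl _ (hFF α)] at hbranches
    simp only [w, Sum.elim_inr, G.adj_comm (.inr α)] at hbranches
    rw [← htotal, ← hbranches, add_comm]
    rfl
end

section
/- For a joint probability tensor B on a product of J finite sets that factorizes as B(x) = (1/Z)·∏_{α∈F} B_α(x_α)·∏_{j∈V} B_j(x_j)^{1−N_j} according to a factor tree, with B_j, B_α its node and factor marginals (all positive), the entropy of B equals the Bethe entropy: H(B) = ∑_{α∈F} H(B_α) − ∑_{j∈V} (N_j − 1)·H(B_j). -/
/-!
Take logarithms in the factorization: `log B(x) = ∑_α log B_α(x_α) + ∑_j (1 - N_j) log B_j(x_j)`.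
Multiplying by `B(x)` and summing over `x`, each term `∑_x B(x) log B_α(x_α)` only depends on
`x` through `x_α`, so grouping the `x` by their restriction turns it into `∑_y B_α(y) log B_α(y)`
because `B_α` is the marginal of `B`; likewise for the variable nodes.
-/

open Finset

theorem Real.log_prod_of_prod_ne_zero {ι : Type*} {s : Finset ι} {f : ι → ℝ}
    (h : ∏ i ∈ s, f i ≠ 0) : Real.log (∏ i ∈ s, f i) = ∑ i ∈ s, Real.log (f i) :=
  Real.log_prod fun _ hi => (prod_ne_zero_iff.mp h) _ hi

/-- Where `p = 0` both sides vanish; elsewhere every factor is nonzero, so the logarithm splits. -/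
theorem mul_log_eq_of_eq_prod_mul_prod_zpow {ι κ : Type*} {s : Finset ι} {t : Finset κ}
    {p : ℝ} {a : ι → ℝ} {b : κ → ℝ} {n : κ → ℤ}
    (h : p = (∏ i ∈ s, a i) * ∏ k ∈ t, b k ^ n k) :
    p * Real.log p = ∑ i ∈ s, p * Real.log (a i) + ∑ k ∈ t, n k * (p * Real.log (b k)) := by
  rcases eq_or_ne p 0 with rfl | hp
  · simp
  have hne : (∏ i ∈ s, a i) * ∏ k ∈ t, b k ^ n k ≠ 0 := h ▸ hp
  have hlog : Real.log p = ∑ i ∈ s, Real.log (a i) + ∑ k ∈ t, n k * Real.log (b k) := by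
    rw [h, Real.log_mul (left_ne_zero_of_mul hne) (right_ne_zero_of_mul hne),
      Real.log_prod_of_prod_ne_zero (left_ne_zero_of_mul hne),
      Real.log_prod_of_prod_ne_zero (right_ne_zero_of_mul hne)]
    simp only [Real.log_zpow]
  rw [hlog, mul_add, mul_sum, mul_sum]
  congr 1
  exact sum_congr rfl fun k _ => by ring

theorem sum_mul_comp_eq_sum_marginal_mul {Ω κ : Type*} [Fintype Ω] [Fintype κ] [DecidableEq κ]
    (B : Ω → ℝ) (f : Ω → κ) (g : κ → ℝ) :
    ∑ x, B x * g (f x) = ∑ y, (∑ x, if f x = y then B x else 0) * g y := by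
  simp_rw [sum_mul, ite_mul, zero_mul]
  rw [sum_comm]
  refine sum_congr rfl fun x _ => ?_
  rw [sum_ite_eq, if_pos (mem_univ _)]

open Classical in
theorem entropy_eq_bethe_entropy_of_tree_factorization_general
    {V F : Type*} [Fintype V] [Fintype F]
    (X : V → Type*) [∀ j, Fintype (X j)]
    (M : F → Finset V)
    (B : ((j : V) → X j) → ℝ) :
    let Bj : (j : V) → X j → ℝ := fun j v => ∑ x, if x j = v then B x else 0
    let Bα : (α : F) → (((j : M α) → X j.1) → ℝ) := fun α y =>
      ∑ x, if (∀ j : M α, x j.1 = y j) then B x else 0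
    let Nj : V → ℕ := fun j => (Finset.univ.filter (fun α : F => j ∈ M α)).card
    (∀ x, B x = (∏ α, Bα α (fun j => x j.1))
        * ∏ j, (Bj j (x j)) ^ ((1 : ℤ) - (Nj j : ℤ))) →
    (-∑ x, B x * Real.log (B x)) =
      (∑ α, -∑ y, Bα α y * Real.log (Bα α y)) -
        ∑ j, ((Nj j : ℝ) - 1) * (-∑ v, Bj j v * Real.log (Bj j v)) := by
  intro Bj Bα Nj hfac
  have hfactor (α : F) : ∑ x, B x * Real.log (Bα α (fun j => x j.1)) =
      ∑ y, Bα α y * Real.log (Bα α y) := by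
    rw [sum_mul_comp_eq_sum_marginal_mul B (fun x (j : M α) => x j.1) fun y => Real.log (Bα α y)]
    simp only [Bα, funext_iff]
  have hvar (j : V) : ∑ x, B x * Real.log (Bj j (x j)) = ∑ v, Bj j v * Real.log (Bj j v) :=
    sum_mul_comp_eq_sum_marginal_mul B (fun x => x j) fun v => Real.log (Bj j v)
  simp_rw [mul_log_eq_of_eq_prod_mul_prod_zpow (hfac _), sum_add_distrib]
  rw [sum_comm (t := (univ : Finset F)), sum_comm (t := (univ : Finset V))]
  simp_rw [← mul_sum, hfactor, hvar]
  push_cast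
  simp only [sum_neg_distrib, mul_neg, sub_mul, one_mul, sum_sub_distrib]
  ring

open Classical in
/-- For a strictly positive joint distribution factorizing according to a factor tree in
terms of its own marginals, the entropy equals the Bethe entropy. -/
theorem entropy_eq_bethe_entropy_of_tree_factorization
    {V F : Type*} [Fintype V] [Fintype F]
    (X : V → Type*) [∀ j, Fintype (X j)]
    (M : F → Finset V)
    (B : ((j : V) → X j) → ℝ) (hBpos : ∀ x, 0 < B x) (hBsum : ∑ x, B x = 1) :
    let Bj : (j : V) → X j → ℝ := fun j v => ∑ x, if x j = v then B x else 0
    let Bα : (α : F) → (((j : M α) → X j.1) → ℝ) := fun α y =>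
      ∑ x, if (∀ j : M α, x j.1 = y j) then B x else 0
    let Nj : V → ℕ := fun j => (Finset.univ.filter (fun α : F => j ∈ M α)).card
    (∀ x, B x = (∏ α, Bα α (fun j => x j.1))
        * ∏ j, (Bj j (x j)) ^ ((1 : ℤ) - (Nj j : ℤ))) →
    (-∑ x, B x * Real.log (B x)) =
      (∑ α, -∑ y, Bα α y * Real.log (Bα α y)) -
        ∑ j, ((Nj j : ℝ) - 1) * (-∑ v, Bj j v * Real.log (Bj j v)) :=
  entropy_eq_bethe_entropy_of_tree_factorization_general X M B
end

section
/- Let μ_1, μ_2 be probability vectors with positive entries and let B be a positive matrix with row sums μ_1 and column sums μ_2. If B(i_1,i_2) = K(i_1,i_2)·u_1(i_1)·u_2(i_2) and B'(i_1,i_2) = K(i_1,i_2)·v_1(i_1)·v_2(i_2) for positive vectors u_1,u_2,v_1,v_2 and a positive matrix K, and both B and B' have row sums μ_1 and column sums μ_2, then B = B', and there exists t > 0 with v_1 = t·u_1 and v_2 = (1/t)·u_2. -/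
/-!
Let `t` be the largest ratio `v₁ i / u₁ i`, attained at `i₀`. Comparing column sums gives
`u₂ j ≤ t * v₂ j` for every `j`. The row equation at `i₀` is then a sum of termwise inequalities
adding up to an equality, so `u₂ = t • v₂`, and substituting this into each row equation gives
`v₁ = t • u₁`.
-/

open Finset

section Scaling

variable {ι κ : Type*} {K : Matrix ι κ ℝ}
  {u₁ v₁ : ι → ℝ} {u₂ v₂ : κ → ℝ} {t : ℝ}

theorem le_mul_of_colSum_eq_of_le_mul [Fintype ι] [Nonempty ι] (hK : ∀ i j, 0 < K i j)
    (hu₁ : ∀ i, 0 < u₁ i) (hv₂ : ∀ j, 0 < v₂ j) (hle : ∀ i, v₁ i ≤ t * u₁ i) (j : κ)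
    (hcol : ∑ i, K i j * v₁ i * v₂ j = ∑ i, K i j * u₁ i * u₂ j) :
    u₂ j ≤ t * v₂ j := by
  have hS : 0 < ∑ i, K i j * u₁ i := sum_pos (fun i _ ↦ mul_pos (hK i j) (hu₁ i)) univ_nonempty
  refine le_of_mul_le_mul_left ?_ hS
  calc (∑ i, K i j * u₁ i) * u₂ j = ∑ i, K i j * v₁ i * v₂ j := by
        rw [hcol, sum_mul]
    _ ≤ ∑ i, K i j * (t * u₁ i) * v₂ j := by
        gcongr with i
        exacts [(hv₂ j).le, (hK i j).le, hle i]
    _ = (∑ i, K i j * u₁ i) * (t * v₂ j) := by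
        rw [sum_mul]
        exact sum_congr rfl fun i _ ↦ by ring

theorem eq_mul_of_rowSum_eq_of_le_mul [Fintype κ] {i₀ : ι} (hK : ∀ j, 0 < K i₀ j)
    (hu₁ : 0 < u₁ i₀) (hv₁ : v₁ i₀ = t * u₁ i₀) (hle : ∀ j, u₂ j ≤ t * v₂ j)
    (hrow : ∑ j, K i₀ j * v₁ i₀ * v₂ j = ∑ j, K i₀ j * u₁ i₀ * u₂ j) (j : κ) :
    u₂ j = t * v₂ j := by
  have hKu : ∀ j, 0 < K i₀ j * u₁ i₀ := fun j ↦ mul_pos (hK j) hu₁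
  have hterm : ∀ j ∈ univ, K i₀ j * u₁ i₀ * u₂ j ≤ K i₀ j * v₁ i₀ * v₂ j := fun j _ ↦
    calc K i₀ j * u₁ i₀ * u₂ j ≤ K i₀ j * u₁ i₀ * (t * v₂ j) :=
          mul_le_mul_of_nonneg_left (hle j) (hKu j).le
      _ = K i₀ j * v₁ i₀ * v₂ j := by rw [hv₁]; ring
  have hj := (sum_eq_sum_iff_of_le hterm).mp hrow.symm j (mem_univ j)
  refine mul_left_cancel₀ (hKu j).ne' (hj.trans ?_)
  rw [hv₁]; ring

theorem eq_mul_of_rowSum_eq_of_eq_mul [Fintype κ] [Nonempty κ] {i : ι} (hK : ∀ j, 0 < K i j)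
    (hv₂ : ∀ j, 0 < v₂ j) (heq : ∀ j, u₂ j = t * v₂ j)
    (hrow : ∑ j, K i j * v₁ i * v₂ j = ∑ j, K i j * u₁ i * u₂ j) :
    v₁ i = t * u₁ i := by
  have hS : 0 < ∑ j, K i j * v₂ j := sum_pos (fun j _ ↦ mul_pos (hK j) (hv₂ j)) univ_nonempty
  refine mul_right_cancel₀ hS.ne' ?_
  calc v₁ i * ∑ j, K i j * v₂ j = ∑ j, K i j * v₁ i * v₂ j := by
        rw [mul_sum]
        exact sum_congr rfl fun j _ ↦ by ring
    _ = t * u₁ i * ∑ j, K i j * v₂ j := by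
        rw [hrow, mul_sum]
        exact sum_congr rfl fun j _ ↦ by rw [heq]; ring

theorem exists_eq_mul_of_scaling_sums_eq [Fintype ι] [Fintype κ] [Nonempty ι] [Nonempty κ]
    (hK : ∀ i j, 0 < K i j) (hu₁ : ∀ i, 0 < u₁ i) (hv₁ : ∀ i, 0 < v₁ i) (hv₂ : ∀ j, 0 < v₂ j)
    (hrow : ∀ i, ∑ j, K i j * v₁ i * v₂ j = ∑ j, K i j * u₁ i * u₂ j)
    (hcol : ∀ j, ∑ i, K i j * v₁ i * v₂ j = ∑ i, K i j * u₁ i * u₂ j) :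
    ∃ t, 0 < t ∧ (∀ i, v₁ i = t * u₁ i) ∧ ∀ j, v₂ j = u₂ j / t := by
  obtain ⟨i₀, hi₀⟩ := Finite.exists_max fun i ↦ v₁ i / u₁ i
  set t := v₁ i₀ / u₁ i₀
  have ht : 0 < t := div_pos (hv₁ i₀) (hu₁ i₀)
  have hle : ∀ i, v₁ i ≤ t * u₁ i := fun i ↦ (div_le_iff₀ (hu₁ i)).mp (hi₀ i)
  have hv₁i₀ : v₁ i₀ = t * u₁ i₀ := (div_mul_cancel₀ _ (hu₁ i₀).ne').symm
  have hu₂ : ∀ j, u₂ j = t * v₂ j :=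
    eq_mul_of_rowSum_eq_of_le_mul (hK i₀) (hu₁ i₀) hv₁i₀
      (fun j ↦ le_mul_of_colSum_eq_of_le_mul hK hu₁ hv₂ hle j (hcol j)) (hrow i₀)
  refine ⟨t, ht, fun i ↦ eq_mul_of_rowSum_eq_of_eq_mul (hK i) hv₂ hu₂ (hrow i), fun j ↦ ?_⟩
  rw [hu₂, mul_div_cancel_left₀ _ ht.ne']

end Scaling

theorem sinkhorn_scaling_uniqueness_general {d₁ d₂ : ℕ}
    (K : Matrix (Fin d₁) (Fin d₂) ℝ) (hK : ∀ i j, 0 < K i j)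
    (u₁ v₁ : Fin d₁ → ℝ) (u₂ v₂ : Fin d₂ → ℝ)
    (hu₁ : ∀ i, 0 < u₁ i)
    (hv₁ : ∀ i, 0 < v₁ i) (hv₂ : ∀ j, 0 < v₂ j)
    (μ₁ : Fin d₁ → ℝ) (μ₂ : Fin d₂ → ℝ)
    (hμ₁s : ∑ i, μ₁ i = 1) (hμ₂s : ∑ j, μ₂ j = 1)
    (B B' : Matrix (Fin d₁) (Fin d₂) ℝ)
    (hB : ∀ i j, B i j = K i j * u₁ i * u₂ j)
    (hB' : ∀ i j, B' i j = K i j * v₁ i * v₂ j)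
    (hrow : ∀ i, ∑ j, B i j = μ₁ i) (hcol : ∀ j, ∑ i, B i j = μ₂ j)
    (hrow' : ∀ i, ∑ j, B' i j = μ₁ i) (hcol' : ∀ j, ∑ i, B' i j = μ₂ j) :
    B = B' ∧ ∃ t : ℝ, 0 < t ∧ (∀ i, v₁ i = t * u₁ i) ∧ (∀ j, v₂ j = u₂ j / t) := by
  have : Nonempty (Fin d₁) :=
    univ_nonempty_iff.mp (nonempty_of_sum_ne_zero (f := μ₁) (by simp [hμ₁s]))
  have : Nonempty (Fin d₂) :=
    univ_nonempty_iff.mp (nonempty_of_sum_ne_zero (f := μ₂) (by simp [hμ₂s]))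
  obtain ⟨t, ht, hv₁u₁, hv₂u₂⟩ := exists_eq_mul_of_scaling_sums_eq hK hu₁ hv₁ hv₂
    (fun i ↦ by simpa only [hB, hB'] using (hrow' i).trans (hrow i).symm)
    (fun j ↦ by simpa only [hB, hB'] using (hcol' j).trans (hcol j).symm)
  refine ⟨Matrix.ext fun i j ↦ ?_, t, ht, hv₁u₁, hv₂u₂⟩
  rw [hB, hB', hv₁u₁, hv₂u₂]
  field_simp

/-- Uniqueness in the Sinkhorn scaling theorem: two positive diagonal scalings of the same
positive matrix with identical row and column sums coincide, and the scaling vectors agree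
up to a positive constant. -/
theorem sinkhorn_scaling_uniqueness {d₁ d₂ : ℕ}
    (K : Matrix (Fin d₁) (Fin d₂) ℝ) (hK : ∀ i j, 0 < K i j)
    (u₁ v₁ : Fin d₁ → ℝ) (u₂ v₂ : Fin d₂ → ℝ)
    (hu₁ : ∀ i, 0 < u₁ i) (hu₂ : ∀ j, 0 < u₂ j)
    (hv₁ : ∀ i, 0 < v₁ i) (hv₂ : ∀ j, 0 < v₂ j)
    (μ₁ : Fin d₁ → ℝ) (μ₂ : Fin d₂ → ℝ)
    (hμ₁ : ∀ i, 0 < μ₁ i) (hμ₂ : ∀ j, 0 < μ₂ j)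
    (hμ₁s : ∑ i, μ₁ i = 1) (hμ₂s : ∑ j, μ₂ j = 1)
    (B B' : Matrix (Fin d₁) (Fin d₂) ℝ)
    (hBpos : ∀ i j, 0 < B i j)
    (hB : ∀ i j, B i j = K i j * u₁ i * u₂ j)
    (hB' : ∀ i j, B' i j = K i j * v₁ i * v₂ j)
    (hrow : ∀ i, ∑ j, B i j = μ₁ i) (hcol : ∀ j, ∑ i, B i j = μ₂ j)
    (hrow' : ∀ i, ∑ j, B' i j = μ₁ i) (hcol' : ∀ j, ∑ i, B' i j = μ₂ j) :
    B = B' ∧ ∃ t : ℝ, 0 < t ∧ (∀ i, v₁ i = t * u₁ i) ∧ (∀ j, v₂ j = u₂ j / t) :=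
  sinkhorn_scaling_uniqueness_general K hK u₁ v₁ u₂ v₂ hu₁ hv₁ hv₂ μ₁ μ₂ hμ₁s hμ₂s B B' hB hB' hrow
    hcol hrow' hcol'
end
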